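/- Counterexample to uniqueness for two unknown force components with h(x,t) = 1 and θ(x,t) = t²: there exist a nonzero pair (f, g) of continuous functions on [0,1] and a function u ∈ C⁴([0,1]×[0,T]), not identically zero, such that u_tt = u_xx + f(x) + g(x)t² on (0,1)×(0,T), with u(x,0) = u_t(x,0) = 0, u(0,t) = u(1,t) = 0, and u_x(0,t) = u_x(1,t) = 0 for all t. For instance, take any nonzero U ∈ C⁴ with compact support in (0,1) and set u(x,t) = t²U(x), f(x) = 2U(x), g(x) = -U''(x); then u_tt - u_xx = 2U(x) - t²U''(x) = f(x)·1 + g(x)·t², and all initial, boundary and flux data of u vanish since U has compact support and u(x,0) = u_t(x,0) = 0. -/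

import Mathlib

open Set Function

private lemma deriv_t (c : ℝ) (t : ℝ) :
    deriv (fun s : ℝ => s ^ 2 * c) t = 2 * t * c := by
  have : deriv (fun s : ℝ => s ^ 2 * c) t = deriv (fun s : ℝ => s ^ 2) t * c := by
    simpa using deriv_mul_const (c := c) (differentiable_pow 2 t)
  simp [this, deriv_pow]

private lemma deriv_x (t x : ℝ) :
    deriv (fun y : ℝ => t ^ 2 * (y ^ 2 - 2 * y ^ 3 + y ^ 4)) x
      = t ^ 2 * (2 * x - 6 * x ^ 2 + 4 * x ^ 3) := by
  have h : HasDerivAt (fun y : ℝ => t ^ 2 * (y ^ 2 - 2 * y ^ 3 + y ^ 4))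
      (t ^ 2 * (2 * x - 6 * x ^ 2 + 4 * x ^ 3)) x := by
    have h1 : HasDerivAt (fun y : ℝ => y ^ 2 - 2 * y ^ 3 + y ^ 4)
        (2 * x - 6 * x ^ 2 + 4 * x ^ 3) x := by
      have := ((hasDerivAt_pow 2 x).sub ((hasDerivAt_pow 3 x).const_mul 2)).add
        (hasDerivAt_pow 4 x)
      exact this.congr_deriv (by norm_num; ring)
    simpa using h1.const_mul (t ^ 2)
  exact h.deriv

private lemma deriv_x2 (t x : ℝ) :
    deriv (fun y : ℝ => t ^ 2 * (2 * y - 6 * y ^ 2 + 4 * y ^ 3)) x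
      = t ^ 2 * (2 - 12 * x + 12 * x ^ 2) := by
  have h : HasDerivAt (fun y : ℝ => t ^ 2 * (2 * y - 6 * y ^ 2 + 4 * y ^ 3))
      (t ^ 2 * (2 - 12 * x + 12 * x ^ 2)) x := by
    have h1 : HasDerivAt (fun y : ℝ => 2 * y - 6 * y ^ 2 + 4 * y ^ 3)
        (2 - 12 * x + 12 * x ^ 2) x := by
      have := (((hasDerivAt_id x).const_mul 2).sub
        ((hasDerivAt_pow 2 x).const_mul 6)).add ((hasDerivAt_pow 3 x).const_mul 4)
      exact this.congr_deriv (by norm_num; ring)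
    simpa using h1.const_mul (t ^ 2)
  exact h.deriv

/-- Counterexample to uniqueness for two unknown additive force components with
`h = 1` and `θ = t²`: the zero Cauchy data admit a nontrivial solution
`(u, f, g)`. -/
theorem nonuniqueness_two_forces
    (T : ℝ) (hT : 0 < T) :
    ∃ (f g : ℝ → ℝ) (u : ℝ → ℝ → ℝ),
      Continuous f ∧ Continuous g ∧ ContDiff ℝ 4 (uncurry u) ∧
      (f ≠ 0 ∨ g ≠ 0) ∧
      (∃ x ∈ Ioo (0:ℝ) 1, ∃ t ∈ Ioo 0 T, u x t ≠ 0) ∧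
      (∀ x ∈ Ioo (0:ℝ) 1, ∀ t ∈ Ioo 0 T,
          deriv (deriv (u x)) t
            = deriv (deriv (fun y => u y t)) x + f x * 1 + g x * t ^ 2) ∧
      (∀ x ∈ Icc (0:ℝ) 1, u x 0 = 0) ∧
      (∀ x ∈ Icc (0:ℝ) 1, deriv (u x) 0 = 0) ∧
      (∀ t ∈ Icc 0 T, u 0 t = 0) ∧
      (∀ t ∈ Icc 0 T, u 1 t = 0) ∧
      (∀ t ∈ Icc 0 T, deriv (fun y => u y t) 0 = 0) ∧
      (∀ t ∈ Icc 0 T, deriv (fun y => u y t) 1 = 0) := by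
  refine ⟨fun x => 2 * (x ^ 2 - 2 * x ^ 3 + x ^ 4),
    fun x => -(2 - 12 * x + 12 * x ^ 2),
    fun x t => t ^ 2 * (x ^ 2 - 2 * x ^ 3 + x ^ 4), by continuity, by continuity,
    ?_, ?_, ?_, ?_, ?_, ?_, ?_, ?_, ?_, ?_⟩
  · -- smoothness
    have : ContDiff ℝ 4 (fun p : ℝ × ℝ =>
        p.2 ^ 2 * (p.1 ^ 2 - 2 * p.1 ^ 3 + p.1 ^ 4)) := by fun_prop
    exact this
  · -- nontriviality of (f,g)
    left
    intro h
    have := congrFun h (1/2 : ℝ)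
    norm_num at this
  · -- nontriviality of u
    refine ⟨1/2, by norm_num, min (T/2) 1, ⟨by positivity, ?_⟩, ?_⟩
    · calc min (T/2) 1 ≤ T/2 := min_le_left _ _
        _ < T := by linarith
    · have h1 : (0:ℝ) < min (T/2) 1 := by positivity
      positivity
  · -- PDE
    intro x _ t _
    have ht : deriv (fun s : ℝ => s ^ 2 * (x ^ 2 - 2 * x ^ 3 + x ^ 4))
        = fun s => 2 * s * (x ^ 2 - 2 * x ^ 3 + x ^ 4) := funext fun s => deriv_t _ s
    have ht2 : deriv (deriv (fun s : ℝ => s ^ 2 * (x ^ 2 - 2 * x ^ 3 + x ^ 4))) t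
        = 2 * (x ^ 2 - 2 * x ^ 3 + x ^ 4) := by
      rw [ht]
      have h : HasDerivAt (fun s : ℝ => 2 * s * (x ^ 2 - 2 * x ^ 3 + x ^ 4))
          (2 * (x ^ 2 - 2 * x ^ 3 + x ^ 4)) t := by
        have := ((hasDerivAt_id t).const_mul 2).mul_const (x ^ 2 - 2 * x ^ 3 + x ^ 4)
        simpa using this
      exact h.deriv
    have hx : deriv (fun y : ℝ => t ^ 2 * (y ^ 2 - 2 * y ^ 3 + y ^ 4))
        = fun y => t ^ 2 * (2 * y - 6 * y ^ 2 + 4 * y ^ 3) := funext fun y => deriv_x t y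
    have hx2 : deriv (deriv (fun y : ℝ => t ^ 2 * (y ^ 2 - 2 * y ^ 3 + y ^ 4))) x
        = t ^ 2 * (2 - 12 * x + 12 * x ^ 2) := by rw [hx]; exact deriv_x2 t x
    rw [ht2, hx2]
    ring
  · intro x _; simp
  · intro x _
    have := deriv_t (x ^ 2 - 2 * x ^ 3 + x ^ 4) 0
    simpa using this
  · intro t _; norm_num
  · intro t _; norm_num
  · intro t _
    have := deriv_x t 0
    simpa using this
  · intro t _
    rw [deriv_x t 1]; norm_num
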